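/- arXiv:2009.11626 — 2 statements merged into one kernel-verified Lean document; each statement's English description precedes it below -/
import Mathlib

section
/- The one-dimensional fractional Laplacian of the function v(t) = (t)_+^s, evaluated at points t < 0, equals -\frac{\Gamma(1+s)}{\Gamma(1-s)} (−t)^{-s}. That is, $(-\Delta)^s (x)_+^s = -\frac{\Gamma(1+s)}{\Gamma(1-s)}\, (x)_-^{-s}$ for $x<0$. -/
/-!
Since `(t)₊^s` vanishes on `(-∞, 0]`, for `x < 0` the principal value is an absolutely convergent
integral over `(0, ∞)`, and the substitution `y = -x t` turns it into
`-(-x)^{-s} ∫₀^∞ t^s (1 + t)^{-1-2s} dt = -(-x)^{-s} B(1 + s, s)`; the half-line form of the Beta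
integral comes from the usual one on `[0, 1]` via `t = x / (1 - x)`. Legendre's duplication formula
then collapses `c_{1,s} B(1 + s, s)` to `Γ(1 + s) / Γ(1 - s)`.
-/

open MeasureTheory Real Set

theorem integral_rpow_mul_one_sub_rpow {u v : ℝ} (hu : 0 < u) (hv : 0 < v) :
    ∫ x in (0 : ℝ)..1, x ^ (u - 1) * (1 - x) ^ (v - 1) = Gamma u * Gamma v / Gamma (u + v) := by
  have key := Complex.betaIntegral_eq_Gamma_mul_div u v (by simpa) (by simpa)
  rw [← Complex.ofReal_add, Complex.Gamma_ofReal, Complex.Gamma_ofReal, Complex.Gamma_ofReal,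
    Complex.betaIntegral, ← Complex.ofReal_mul, ← Complex.ofReal_div] at key
  rw [← Complex.ofReal_inj, ← key, ← intervalIntegral.integral_ofReal]
  refine intervalIntegral.integral_congr fun x hx => ?_
  rw [uIcc_of_le zero_le_one] at hx
  push_cast
  rw [Complex.ofReal_cpow hx.1, Complex.ofReal_cpow (sub_nonneg.2 hx.2)]
  push_cast
  rfl

theorem image_div_one_sub_Ioo : (fun x : ℝ => x / (1 - x)) '' Ioo 0 1 = Ioi 0 := by
  ext t
  constructor
  · rintro ⟨x, ⟨hx0, hx1⟩, rfl⟩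
    exact div_pos hx0 (sub_pos.2 hx1)
  · intro (ht : 0 < t)
    refine ⟨t / (1 + t), ⟨by positivity, (div_lt_one (by positivity)).2 (by linarith)⟩, ?_⟩
    field_simp
    ring

theorem injOn_div_one_sub : InjOn (fun x : ℝ => x / (1 - x)) (Ioo 0 1) := by
  intro a ⟨_, ha⟩ b ⟨_, hb⟩ hab
  have : (1 : ℝ) - a ≠ 0 := by linarith
  have : (1 : ℝ) - b ≠ 0 := by linarith
  field_simp at hab
  linarith

theorem hasDerivAt_div_one_sub {x : ℝ} (hx : x ≠ 1) :
    HasDerivAt (fun x : ℝ => x / (1 - x)) (1 / (1 - x) ^ 2) x := by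
  refine ((hasDerivAt_id' x).div ((hasDerivAt_id' x).const_sub 1)
    (sub_ne_zero.2 hx.symm)).congr_deriv ?_
  ring

theorem integral_Ioi_rpow_mul_one_add_rpow {u v : ℝ} (hu : 0 < u) (hv : 0 < v) :
    ∫ t in Ioi (0 : ℝ), t ^ (u - 1) * (1 + t) ^ (-(u + v)) = Gamma u * Gamma v / Gamma (u + v) := by
  rw [← integral_rpow_mul_one_sub_rpow hu hv, ← image_div_one_sub_Ioo,
    integral_image_eq_integral_abs_deriv_smul measurableSet_Ioo
      (fun x hx => (hasDerivAt_div_one_sub hx.2.ne).hasDerivWithinAt) injOn_div_one_sub,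
    intervalIntegral.integral_of_le zero_le_one, integral_Ioc_eq_integral_Ioo]
  refine setIntegral_congr_fun measurableSet_Ioo fun x ⟨hx0, hx1⟩ => ?_
  have h1x : 0 < 1 - x := sub_pos.2 hx1
  have hsum : 1 + x / (1 - x) = (1 - x)⁻¹ := by field_simp; ring
  rw [smul_eq_mul, hsum, abs_of_pos (by positivity), div_rpow hx0.le h1x.le,
    inv_rpow h1x.le, ← rpow_neg h1x.le, neg_neg, div_eq_mul_inv _ ((1 - x) ^ (u - 1)),
    ← rpow_neg h1x.le, one_div, ← rpow_natCast, ← rpow_neg h1x.le]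
  calc (1 - x) ^ (-((2 : ℕ) : ℝ)) * (x ^ (u - 1) * (1 - x) ^ (-(u - 1)) * (1 - x) ^ (u + v))
      = x ^ (u - 1) * ((1 - x) ^ (-((2 : ℕ) : ℝ)) * (1 - x) ^ (-(u - 1)) * (1 - x) ^ (u + v)) := by
        ring
    _ = x ^ (u - 1) * (1 - x) ^ (v - 1) := by
        rw [← rpow_add h1x, ← rpow_add h1x]
        congr 2
        push_cast
        ring

theorem integral_Ioi_rpow_mul_add_rpow {a : ℝ} (ha : 0 < a) (p q : ℝ) :
    ∫ y in Ioi (0 : ℝ), y ^ p * (y + a) ^ q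
      = a ^ (p + q + 1) * ∫ t in Ioi (0 : ℝ), t ^ p * (1 + t) ^ q := by
  have hscale := integral_comp_mul_left_Ioi (fun y : ℝ => y ^ p * (y + a) ^ q) 0 ha
  rw [mul_zero, smul_eq_mul] at hscale
  rw [← mul_inv_cancel_left₀ ha.ne' (∫ y in Ioi (0 : ℝ), y ^ p * (y + a) ^ q), ← hscale,
    ← integral_const_mul, ← integral_const_mul]
  refine setIntegral_congr_fun measurableSet_Ioi fun t (ht : 0 < t) => ?_
  rw [show a * t + a = a * (1 + t) by ring, mul_rpow ha.le ht.le, mul_rpow ha.le (by positivity),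
    rpow_add ha, rpow_add ha, rpow_one]
  field_simp

theorem integral_posPart_rpow_div_abs_sub_rpow_of_neg {s x : ℝ} (hs : 0 < s) (hx : x < 0) :
    ∫ y : ℝ, (max x 0 ^ s - max y 0 ^ s) / |x - y| ^ (1 + 2 * s)
      = -∫ y in Ioi (0 : ℝ), y ^ s * (y + -x) ^ (-(1 + 2 * s)) := by
  have hx0 : max x 0 = 0 := max_eq_right hx.le
  rw [← integral_neg, ← setIntegral_eq_integral_of_forall_compl_eq_zero fun y (hy : ¬ 0 < y) => by
    rw [hx0, max_eq_right (not_lt.1 hy), zero_rpow hs.ne', sub_self, zero_div]]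
  refine setIntegral_congr_fun measurableSet_Ioi fun y (hy : 0 < y) => ?_
  rw [hx0, max_eq_left hy.le, zero_rpow hs.ne', zero_sub, abs_of_neg (by linarith), neg_sub,
    ← sub_eq_add_neg, rpow_neg (by linarith), neg_div, div_eq_mul_inv]

theorem fracLaplacianConst_mul_beta_eq {s : ℝ} (hs : 0 < s) (hs1 : s < 1) :
    s * 2 ^ (2 * s) * Gamma ((1 + 2 * s) / 2) / (π ^ ((1 : ℝ) / 2) * Gamma (1 - s)) *
      (Gamma (1 + s) * Gamma s / Gamma (1 + 2 * s)) = Gamma (1 + s) / Gamma (1 - s) := by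
  have hpow : (2 : ℝ) ^ (2 * s) * 2 ^ (1 - 2 * s) = 2 := by
    rw [← rpow_add two_pos]; norm_num
  have hrec : Gamma (1 + 2 * s) = 2 * s * Gamma (2 * s) := by
    rw [add_comm, Gamma_add_one (by positivity)]
  have hΓ : Gamma (1 - s) ≠ 0 := (Gamma_pos_of_pos (by linarith)).ne'
  have : Gamma (2 * s) ≠ 0 := (Gamma_pos_of_pos (by linarith)).ne'
  rw [show (1 + 2 * s) / 2 = s + 1 / 2 by ring, hrec, ← sqrt_eq_rpow, div_mul_div_comm,
    div_eq_div_iff (by positivity) hΓ]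
  linear_combination (s * 2 ^ (2 * s) * Gamma (1 + s) * Gamma (1 - s)) * Gamma_mul_Gamma_add_half s
    + (s * Gamma (1 + s) * Gamma (1 - s) * √π * Gamma (2 * s)) * hpow

/-- The one-dimensional fractional Laplacian of `v(t) = (t)₊^s` at a point `x < 0` equals
`-(Γ(1+s)/Γ(1-s)) (-x)^{-s}`. Since `v` vanishes on a neighborhood of `x`, the principal
value integral is an ordinary (Lebesgue) integral. -/
theorem stmt_0 (s x : ℝ) (hs : 0 < s) (hs1 : s < 1) (hx : x < 0) :
    (s * 2 ^ (2 * s) * Real.Gamma ((1 + 2 * s) / 2) / (π ^ ((1 : ℝ) / 2) * Real.Gamma (1 - s))) *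
        ∫ y : ℝ, (max x 0 ^ s - max y 0 ^ s) / |x - y| ^ (1 + 2 * s) =
      -(Real.Gamma (1 + s) / Real.Gamma (1 - s)) * (-x) ^ (-s) := by
  have hbeta := integral_Ioi_rpow_mul_one_add_rpow (u := 1 + s) (v := s) (by linarith) hs
  rw [add_sub_cancel_left, show 1 + s + s = 1 + 2 * s by ring] at hbeta
  rw [integral_posPart_rpow_div_abs_sub_rpow_of_neg hs hx,
    integral_Ioi_rpow_mul_add_rpow (neg_pos.2 hx), hbeta, show s + -(1 + 2 * s) + 1 = -s by ring,
    ← fracLaplacianConst_mul_beta_eq hs hs1]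
  ring
end

section
/- For $s\in(0,1)$, the integral $\int_0^\pi (1+\cos\theta)^{2s}(\cos\theta - 1)(\sin\theta)^{1-2s}\,d\theta$ equals $-\frac{2\pi s(1-s)}{\sin(\pi s)}$. -/
/-!
The substitution `t = (1 - cos θ) / 2` maps `(0, π)` onto `(0, 1)` with `1 - t = (1 + cos θ) / 2`,
`sin θ = 2 √(t (1 - t))` and `dt = sin θ / 2 dθ`, turning the integral into
`-4 ∫₀¹ t^(1-s) (1-t)^s dt = -4 B(2 - s, 1 + s)`. Since `Γ(2 - s) Γ(1 + s) = s (1 - s) Γ(s) Γ(1 - s)`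
and `Γ(3) = 2`, Euler's reflection formula gives the value.
-/

open MeasureTheory Real

theorem integral_rpow_mul_one_sub_rpow_s9 {a b : ℝ} (ha : 0 < a) (hb : 0 < b) :
    ∫ t in (0 : ℝ)..1, t ^ (a - 1) * (1 - t) ^ (b - 1) = Gamma a * Gamma b / Gamma (a + b) := by
  have hcast : Complex.betaIntegral a b =
      ((∫ t in (0 : ℝ)..1, t ^ (a - 1) * (1 - t) ^ (b - 1) : ℝ) : ℂ) := by
    rw [Complex.betaIntegral, ← intervalIntegral.integral_ofReal]
    refine intervalIntegral.integral_congr fun t ht => ?_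
    rw [Set.uIcc_of_le zero_le_one] at ht
    simp only [Complex.ofReal_mul, Complex.ofReal_cpow ht.1,
      Complex.ofReal_cpow (sub_nonneg.2 ht.2), Complex.ofReal_sub, Complex.ofReal_one]
  have h := Complex.betaIntegral_eq_Gamma_mul_div a b (by simpa) (by simpa)
  rw [hcast, ← Complex.ofReal_add, Complex.Gamma_ofReal, Complex.Gamma_ofReal,
    Complex.Gamma_ofReal] at h
  exact_mod_cast h

theorem integral_rpow_one_sub_mul_one_sub_rpow {s : ℝ} (hs : 0 < s) (hs1 : s < 1) :
    ∫ t in (0 : ℝ)..1, t ^ (1 - s) * (1 - t) ^ s = π * s * (1 - s) / (2 * sin (π * s)) := by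
  have h := integral_rpow_mul_one_sub_rpow_s9 (a := 2 - s) (b := 1 + s) (by linarith) (by linarith)
  have hΓ3 : Gamma 3 = 2 := by
    rw [show (3 : ℝ) = 2 + 1 by norm_num, Gamma_add_one two_ne_zero, Gamma_two]; norm_num
  rw [show 2 - s = (1 - s) + 1 by ring, show 1 + s = s + 1 by ring,
    show 1 - s + 1 + (s + 1) = 3 by ring, Gamma_add_one (by linarith), Gamma_add_one hs.ne', hΓ3,
    show 1 - s + 1 - 1 = 1 - s by ring, show s + 1 - 1 = s by ring] at h
  have hsin : sin (π * s) ≠ 0 :=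
    (sin_pos_of_pos_of_lt_pi (by positivity) (by nlinarith [pi_pos])).ne'
  have hrefl : Gamma s * Gamma (1 - s) * sin (π * s) = π := by
    rw [Gamma_mul_Gamma_one_sub, div_mul_cancel₀ _ hsin]
  rw [h, eq_div_iff (mul_ne_zero two_ne_zero hsin)]
  linear_combination s * (1 - s) * hrefl

theorem integral_comp_one_sub_cos_div_two_mul_sin {g : ℝ → ℝ} (hg : Continuous g) :
    ∫ θ in (0 : ℝ)..π, g ((1 - cos θ) / 2) * (sin θ / 2) = ∫ t in (0 : ℝ)..1, g t := by
  have h := intervalIntegral.integral_comp_mul_deriv (a := 0) (b := π)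
    (f := fun θ => (1 - cos θ) / 2) (f' := fun θ => sin θ / 2) (g := g)
    (fun θ _ => by simpa using ((hasDerivAt_cos θ).const_sub 1).div_const 2) (by fun_prop) hg
  simpa using h

theorem rpow_two_mul_mul_mul_rpow_one_sub_two_mul {a b σ : ℝ} (s : ℝ) (ha : 0 < a) (hb : 0 < b)
    (hσ : 0 < σ) (h : σ ^ 2 = a * b) :
    a ^ (2 * s) * b * σ ^ (1 - 2 * s) = a ^ s * b ^ (1 - s) * σ := by
  have hσ' : σ ^ (1 - 2 * s) = σ * (a ^ (-s) * b ^ (-s)) := by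
    rw [sub_eq_add_neg, rpow_add hσ, rpow_one, neg_mul_eq_mul_neg, rpow_mul hσ.le, rpow_two, h,
      mul_rpow ha.le hb.le]
  have ha' : a ^ (2 * s) * a ^ (-s) = a ^ s := by rw [← rpow_add ha]; ring_nf
  have hb' : b * b ^ (-s) = b ^ (1 - s) := by rw [sub_eq_add_neg, rpow_add hb, rpow_one]
  rw [hσ', ← ha', ← hb']
  ring

theorem div_rpow_one_sub_mul_div_rpow {x y c : ℝ} (s : ℝ) (hx : 0 ≤ x) (hy : 0 ≤ y) (hc : 0 < c) :
    (x / c) ^ (1 - s) * (y / c) ^ s = x ^ (1 - s) * y ^ s / c := by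
  rw [div_rpow hx hc.le, div_rpow hy hc.le, div_mul_div_comm, ← rpow_add hc, sub_add_cancel,
    rpow_one]

theorem one_add_cos_rpow_mul_cos_sub_one_mul_sin_rpow {θ : ℝ} (s : ℝ) (hθ : θ ∈ Set.Ioo 0 π) :
    (1 + cos θ) ^ (2 * s) * (cos θ - 1) * sin θ ^ (1 - 2 * s) =
      -4 * (((1 - cos θ) / 2) ^ (1 - s) * (1 - (1 - cos θ) / 2) ^ s) * (sin θ / 2) := by
  have hsin : 0 < sin θ := sin_pos_of_pos_of_lt_pi hθ.1 hθ.2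
  have ha : 0 < 1 + cos θ := by
    linarith [cos_pi, cos_lt_cos_of_nonneg_of_le_pi hθ.1.le le_rfl hθ.2]
  have hb : 0 < 1 - cos θ := by linarith [cos_zero, cos_lt_cos_of_nonneg_of_le_pi le_rfl hθ.2.le hθ.1]
  have hsq : sin θ ^ 2 = (1 + cos θ) * (1 - cos θ) := by linear_combination sin_sq θ
  rw [show 1 - (1 - cos θ) / 2 = (1 + cos θ) / 2 by ring,
    div_rpow_one_sub_mul_div_rpow s hb.le ha.le two_pos, show cos θ - 1 = -(1 - cos θ) by ring,
    mul_neg, neg_mul, rpow_two_mul_mul_mul_rpow_one_sub_two_mul s ha hb hsin hsq]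
  ring

/-- For `s ∈ (0,1)`,
`∫_0^π (1+cos θ)^{2s} (cos θ - 1) (sin θ)^{1-2s} dθ = -2π s(1-s)/sin(πs)`. -/
theorem stmt_9 (s : ℝ) (hs : 0 < s) (hs1 : s < 1) :
    ∫ θ in Set.Ioo (0 : ℝ) π,
        (1 + Real.cos θ) ^ (2 * s) * (Real.cos θ - 1) * (Real.sin θ) ^ (1 - 2 * s) =
      -(2 * π * s * (1 - s) / Real.sin (π * s)) := by
  set g : ℝ → ℝ := fun t => -4 * (t ^ (1 - s) * (1 - t) ^ s)
  have hg : Continuous g := by fun_prop (disch := linarith)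
  calc ∫ θ in Set.Ioo (0 : ℝ) π,
        (1 + cos θ) ^ (2 * s) * (cos θ - 1) * sin θ ^ (1 - 2 * s)
      = ∫ θ in Set.Ioo (0 : ℝ) π, g ((1 - cos θ) / 2) * (sin θ / 2) :=
        setIntegral_congr_fun measurableSet_Ioo fun θ hθ =>
          one_add_cos_rpow_mul_cos_sub_one_mul_sin_rpow s hθ
    _ = ∫ θ in (0 : ℝ)..π, g ((1 - cos θ) / 2) * (sin θ / 2) := by
        rw [intervalIntegral.integral_of_le pi_pos.le, integral_Ioc_eq_integral_Ioo]
    _ = -4 * ∫ t in (0 : ℝ)..1, t ^ (1 - s) * (1 - t) ^ s := by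
        rw [integral_comp_one_sub_cos_div_two_mul_sin hg, intervalIntegral.integral_const_mul]
    _ = -(2 * π * s * (1 - s) / sin (π * s)) := by
        rw [integral_rpow_one_sub_mul_one_sub_rpow hs hs1]; ring
end
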